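/- arXiv:1910.04051 — 3 statements merged into one kernel-verified Lean document; each statement's English description precedes it below -/
import Mathlib

section
/- Let G be a finite group of order n generated by a subset S with e ∉ S and S = S⁻¹. Then the signed domination number of the Cayley graph Cay(S:G) equals 1 if and only if S = G \ {e} and n is odd. -/
/-- The Cayley graph `Cay(S:G)` of a group `G` with connection set `S`:
vertices are the group elements, and `a`, `b` are adjacent iff `a * b⁻¹ ∈ S`
(for an inverse-closed `S` not containing the identity). -/
def cayleyGraph {G : Type*} [Group G] (S : Set G) : SimpleGraph G :=
  SimpleGraph.fromRel (fun a b => a * b⁻¹ ∈ S)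

open Classical in
/-- The signed domination number of a finite simple graph: the minimum weight
`∑ v, g v` over all signed dominating functions, i.e. functions `g : V → {±1}`
whose sum over every closed neighborhood `N[v]` is positive. -/
noncomputable def signedDomNum {V : Type*} [Fintype V] (Γ : SimpleGraph V) : ℤ :=
  sInf {w : ℤ | ∃ g : V → ℤ, (∀ v, g v = 1 ∨ g v = -1) ∧
    (∀ v : V, 0 < g v + ∑ u : V, if Γ.Adj v u then g u else 0) ∧
    w = ∑ v : V, g v}

/-!
Summing the conditions `g(N[v]) ≥ 1` over all vertices of a `k`-regular graph counts every value of
`g` exactly `k + 1` times, so `|V| ≤ (k + 1) · w(g)`. A signed dominating function of weight `1`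
therefore forces `k = |V| - 1`, i.e. the graph is complete, and `|V|` is odd because the weight of a
`±1`-function has the parity of `|V|`. Cayley graphs are regular (right multiplications are
automorphisms), and `Cay(S:G)` is complete exactly when `S = G \ {e}`. Conversely, in a complete
graph every closed neighbourhood is the whole vertex set, so the signed dominating functions are the
`±1`-functions of positive weight, and for `|V|` odd one of weight `1` exists.
-/

open Finset

lemma even_card_sub_sum_of_forall_eq_one_or_neg_one {ι : Type*} [Fintype ι] {g : ι → ℤ}
    (hg : ∀ i, g i = 1 ∨ g i = -1) : Even ((Fintype.card ι : ℤ) - ∑ i, g i) := by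
  have hcard : (Fintype.card ι : ℤ) = ∑ _i : ι, (1 : ℤ) := by simp
  rw [hcard, ← sum_sub_distrib]
  refine even_sum _ fun i _ => ?_
  rcases hg i with h | h <;> simp [h]

lemma exists_forall_eq_one_or_neg_one_sum_eq_one {ι : Type*} [Fintype ι]
    (hι : Odd (Fintype.card ι)) : ∃ g : ι → ℤ, (∀ i, g i = 1 ∨ g i = -1) ∧ ∑ i, g i = 1 := by
  classical
  obtain ⟨m, hm⟩ := hι
  obtain ⟨s, -, hs⟩ := exists_subset_card_eq (s := (univ : Finset ι)) (n := m) (by simp; omega)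
  refine ⟨fun i => 1 - 2 * if i ∈ s then 1 else 0, fun i => by by_cases hi : i ∈ s <;> simp [hi], ?_⟩
  simp only [sum_sub_distrib, ← mul_sum, sum_boole, sum_const, card_univ, hm, filter_mem_eq_inter,
    univ_inter, hs]
  ring

namespace SimpleGraph

variable {V : Type*} [Fintype V] {Γ : SimpleGraph V} {g : V → ℤ} {k : ℕ}

open Classical in
def IsSignedDomFun (Γ : SimpleGraph V) (g : V → ℤ) : Prop :=
  (∀ v, g v = 1 ∨ g v = -1) ∧ ∀ v, 0 < g v + ∑ u, if Γ.Adj v u then g u else 0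

def signedDomWeights (Γ : SimpleGraph V) : Set ℤ :=
  {w | ∃ g, Γ.IsSignedDomFun g ∧ w = ∑ v, g v}

lemma signedDomNum_eq_sInf (Γ : SimpleGraph V) :
    signedDomNum Γ = sInf Γ.signedDomWeights := by
  simp only [signedDomNum, signedDomWeights, IsSignedDomFun, and_assoc]

lemma IsSignedDomFun.neg_card_le_sum (hg : Γ.IsSignedDomFun g) :
    -(Fintype.card V : ℤ) ≤ ∑ v, g v := by
  have hcard : -(Fintype.card V : ℤ) = ∑ _v : V, (-1 : ℤ) := by simp
  rw [hcard]
  exact sum_le_sum fun v _ => by rcases hg.1 v with h | h <;> simp [h]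

lemma isSignedDomFun_one (Γ : SimpleGraph V) : Γ.IsSignedDomFun 1 := by
  classical
  refine ⟨fun v => Or.inl rfl, fun v => ?_⟩
  simp only [Pi.one_apply, sum_boole]
  positivity

lemma signedDomWeights_nonempty (Γ : SimpleGraph V) : Γ.signedDomWeights.Nonempty :=
  ⟨_, 1, isSignedDomFun_one Γ, rfl⟩

lemma bddBelow_signedDomWeights (Γ : SimpleGraph V) :
    BddBelow Γ.signedDomWeights := by
  refine ⟨-(Fintype.card V : ℤ), ?_⟩
  rintro _ ⟨g, hg, rfl⟩
  exact hg.neg_card_le_sum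

lemma signedDomNum_le (hg : Γ.IsSignedDomFun g) : signedDomNum Γ ≤ ∑ v, g v := by
  rw [signedDomNum_eq_sInf]
  exact csInf_le (bddBelow_signedDomWeights Γ) ⟨g, hg, rfl⟩

lemma le_signedDomNum {w : ℤ} (h : ∀ g, Γ.IsSignedDomFun g → w ≤ ∑ v, g v) :
    w ≤ signedDomNum Γ := by
  rw [signedDomNum_eq_sInf]
  refine le_csInf (signedDomWeights_nonempty Γ) ?_
  rintro _ ⟨g, hg, rfl⟩
  exact h g hg

lemma exists_isSignedDomFun_sum_eq_signedDomNum (Γ : SimpleGraph V) :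
    ∃ g, Γ.IsSignedDomFun g ∧ ∑ v, g v = signedDomNum Γ := by
  rw [signedDomNum_eq_sInf]
  obtain ⟨g, hg, hw⟩ := Int.csInf_mem (signedDomWeights_nonempty Γ) (bddBelow_signedDomWeights Γ)
  exact ⟨g, hg, hw.symm⟩

open Classical in
lemma IsRegularOfDegree.sum_closedNeighbor_sum (hΓ : Γ.IsRegularOfDegree k) (g : V → ℤ) :
    ∑ v, (g v + ∑ u, if Γ.Adj v u then g u else 0) = (k + 1) * ∑ v, g v := by
  have hcol : ∀ u, (∑ v, if Γ.Adj v u then g u else 0) = k * g u := by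
    intro u
    simp_rw [Γ.adj_comm _ u]
    rw [← sum_filter, sum_const, ← neighborFinset_eq_filter, card_neighborFinset_eq_degree, hΓ u,
      nsmul_eq_mul]
  rw [sum_add_distrib, sum_comm, sum_congr rfl fun u _ => hcol u, ← mul_sum]
  ring

open Classical in
lemma IsSignedDomFun.card_le_mul_sum (hΓ : Γ.IsRegularOfDegree k) (hg : Γ.IsSignedDomFun g) :
    (Fintype.card V : ℤ) ≤ (k + 1) * ∑ v, g v := by
  rw [← hΓ.sum_closedNeighbor_sum]
  calc (Fintype.card V : ℤ) = ∑ _v : V, (1 : ℤ) := by simp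
    _ ≤ _ := sum_le_sum fun v _ => hg.2 v

open Classical in
lemma eq_top_of_signedDomNum_eq_one (hΓ : Γ.IsRegularOfDegree k) (h : signedDomNum Γ = 1) :
    Γ = ⊤ := by
  obtain ⟨g, hg, hw⟩ := exists_isSignedDomFun_sum_eq_signedDomNum Γ
  have hcard := hg.card_le_mul_sum hΓ
  rw [hw, h] at hcard
  refine eq_top_iff_forall_isUniversal.mpr fun v => ?_
  have hlt := Γ.degree_lt_card_verts v
  rw [hΓ v] at hlt
  rw [← degree_eq_card_sub_one, hΓ v]
  omega

lemma odd_card_of_signedDomNum_eq_one (h : signedDomNum Γ = 1) :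
    Odd (Fintype.card V) := by
  obtain ⟨g, hg, hw⟩ := exists_isSignedDomFun_sum_eq_signedDomNum Γ
  have heven := even_card_sub_sum_of_forall_eq_one_or_neg_one hg.1
  rw [hw, h, Int.even_sub_one] at heven
  exact_mod_cast Int.not_even_iff_odd.mp heven

lemma isSignedDomFun_top_iff [Nonempty V] :
    (⊤ : SimpleGraph V).IsSignedDomFun g ↔ (∀ v, g v = 1 ∨ g v = -1) ∧ 0 < ∑ v, g v := by
  classical
  have hnbhd : ∀ v, (g v + ∑ u, if v ≠ u then g u else 0) = ∑ u, g u := fun v => by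
    rw [← add_sum_erase univ g (mem_univ v), ← filter_ne, ← sum_filter]
  simp only [IsSignedDomFun, top_adj, hnbhd, forall_const]

lemma signedDomNum_top (hV : Odd (Fintype.card V)) : signedDomNum (⊤ : SimpleGraph V) = 1 := by
  have : Nonempty V := Fintype.card_pos_iff.mp hV.pos
  obtain ⟨g, hg, hw⟩ := exists_forall_eq_one_or_neg_one_sum_eq_one hV
  refine le_antisymm ?_ (le_signedDomNum fun g' hg' => (isSignedDomFun_top_iff.mp hg').2)
  rw [← hw]
  exact signedDomNum_le (isSignedDomFun_top_iff.mpr ⟨hg, by omega⟩)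

end SimpleGraph

section Cayley

variable {G : Type*} [Group G] {S : Set G}

lemma cayleyGraph_adj (he : (1 : G) ∉ S) (hinv : S⁻¹ = S) (a b : G) :
    (cayleyGraph S).Adj a b ↔ a * b⁻¹ ∈ S := by
  simp only [cayleyGraph, SimpleGraph.fromRel_adj, ne_eq]
  refine ⟨fun ⟨_, h⟩ => h.elim id fun h => ?_, fun h => ⟨?_, Or.inl h⟩⟩
  · rw [← hinv]
    simpa using h
  · rintro rfl
    exact he (by simpa using h)

def cayleyGraphMulRight (S : Set G) (c : G) : cayleyGraph S ≃g cayleyGraph S where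
  toEquiv := Equiv.mulRight c
  map_rel_iff' := by simp [cayleyGraph, mul_assoc]

open Classical in
lemma cayleyGraph_isRegularOfDegree [Fintype G] (S : Set G) :
    (cayleyGraph S).IsRegularOfDegree ((cayleyGraph S).degree 1) := fun v => by
  have h := (cayleyGraphMulRight S v).degree_eq 1
  rwa [show cayleyGraphMulRight S v 1 = v from one_mul v] at h

lemma cayleyGraph_eq_top_iff (he : (1 : G) ∉ S) (hinv : S⁻¹ = S) :
    cayleyGraph S = ⊤ ↔ S = {1}ᶜ := by
  simp only [SimpleGraph.eq_top_iff_forall_ne_adj, cayleyGraph_adj he hinv]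
  constructor
  · intro h
    ext x
    exact ⟨fun hx hx1 => he (hx1 ▸ hx), fun hx => by simpa using h x 1 hx⟩
  · rintro rfl a b hab
    simpa [mul_inv_eq_one] using hab

end Cayley

theorem stmt_0_general {G : Type*} [Group G] [Fintype G] (n : ℕ)
    (hn : Fintype.card G = n) (S : Set G)
    (he : (1 : G) ∉ S) (hinv : S⁻¹ = S) :
    signedDomNum (cayleyGraph S) = 1 ↔ (S = {(1 : G)}ᶜ ∧ Odd n) := by
  subst hn
  constructor
  · intro h
    exact ⟨(cayleyGraph_eq_top_iff he hinv).mp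
        (SimpleGraph.eq_top_of_signedDomNum_eq_one (cayleyGraph_isRegularOfDegree S) h),
      SimpleGraph.odd_card_of_signedDomNum_eq_one h⟩
  · rintro ⟨hS, hodd⟩
    rw [(cayleyGraph_eq_top_iff he hinv).mpr hS]
    exact SimpleGraph.signedDomNum_top hodd

theorem stmt_0 {G : Type*} [Group G] [Fintype G] (n : ℕ)
    (hn : Fintype.card G = n) (S : Set G)
    (hgen : Subgroup.closure S = ⊤) (he : (1 : G) ∉ S) (hinv : S⁻¹ = S) :
    signedDomNum (cayleyGraph S) = 1 ↔ (S = {(1 : G)}ᶜ ∧ Odd n) :=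
  stmt_0_general n hn S he hinv
end

section
/- Let G be a finite group of even order n generated by a subset S with e ∉ S and S = S⁻¹. If |S| = n − 3, then the signed domination number of the Cayley graph Cay(S:G) equals 4. -/
/-!
Outside the two non-neighbours, Cay(S:G) is complete: with `T = G \ (S ∪ {1})`, `|T| = 2`, the
closed neighbourhood of `v` is `G` minus the two vertices `t⁻¹ v`, `t ∈ T`. So a sign function `g`
of total weight `W` is dominating iff `g (t₁⁻¹ v) + g (t₂⁻¹ v) < W` for all `v`. Since `n` is even,
`W` is even, so this reads `g (t₁⁻¹ v) + g (t₂⁻¹ v) ≤ W - 2`; summing over `v` gives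
`2W ≤ n (W - 2)`, which forces `W ≥ 4`. Conversely every sign function of weight `4` dominates.
-/

open Finset

open Classical in
noncomputable def SimpleGraph.closedNbhdSum {V : Type*} [Fintype V] (Γ : SimpleGraph V)
    (g : V → ℤ) (v : V) : ℤ :=
  g v + ∑ u : V, if Γ.Adj v u then g u else 0

theorem signedDomNum_eq {V : Type*} [Fintype V] {Γ : SimpleGraph V} {w : ℤ}
    (hmem : ∃ g : V → ℤ, (∀ v, g v = 1 ∨ g v = -1) ∧ (∀ v, 0 < Γ.closedNbhdSum g v) ∧
      ∑ v, g v = w)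
    (hle : ∀ g : V → ℤ, (∀ v, g v = 1 ∨ g v = -1) → (∀ v, 0 < Γ.closedNbhdSum g v) →
      w ≤ ∑ v, g v) :
    signedDomNum Γ = w := by
  obtain ⟨g, hg, hdom, rfl⟩ := hmem
  refine IsLeast.csInf_eq ⟨⟨g, hg, hdom, rfl⟩, ?_⟩
  rintro _ ⟨g', hg', hdom', rfl⟩
  exact hle g' hg' hdom'

theorem even_sum_of_eq_one_or_neg_one {ι : Type*} (s : Finset ι) {g : ι → ℤ}
    (hg : ∀ i, g i = 1 ∨ g i = -1) (hs : Even s.card) : Even (∑ i ∈ s, g i) := by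
  have hsplit : ∑ i ∈ s, g i = ∑ i ∈ s, (g i - 1) + s.card := by
    simp [sum_sub_distrib]
  rw [hsplit]
  refine (even_iff_two_dvd.2 (dvd_sum fun i _ => ?_)).add (hs.natCast)
  rcases hg i with h | h <;> simp [h]

theorem exists_eq_one_or_neg_one_sum_eq {V : Type*} [Fintype V] {k : ℕ}
    (hk : k ≤ Fintype.card V) :
    ∃ g : V → ℤ, (∀ v, g v = 1 ∨ g v = -1) ∧ ∑ v, g v = Fintype.card V - 2 * k := by
  classical
  obtain ⟨M, -, hM⟩ := exists_subset_card_eq (s := (univ : Finset V)) (by simpa using hk)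
  refine ⟨fun v => 1 - 2 * if v ∈ M then 1 else 0, fun v => by by_cases h : v ∈ M <;> simp [h],
    ?_⟩
  simp [sum_sub_distrib, hM]
  ring

section CayleyGraph

variable {G : Type*} [Group G]

theorem cayleyGraph_adj_iff {S : Set G} (he : (1 : G) ∉ S) (hinv : S⁻¹ = S) {a b : G} :
    (cayleyGraph S).Adj a b ↔ a * b⁻¹ ∈ S := by
  simp only [cayleyGraph, SimpleGraph.fromRel_adj]
  refine ⟨?_, fun h => ⟨?_, Or.inl h⟩⟩
  · rintro ⟨-, h | h⟩
    · exact h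
    · rw [← hinv]
      simpa using h
  · rintro rfl
    exact he (by simpa using h)

variable [Fintype G]

theorem sum_sum_inv_mul (T : Finset G) (g : G → ℤ) :
    ∑ v, ∑ t ∈ T, g (t⁻¹ * v) = T.card * ∑ v, g v := by
  rw [sum_comm]
  have htranslate (t : G) : ∑ v, g (t⁻¹ * v) = ∑ v, g v := Equiv.sum_comp (Equiv.mulLeft t⁻¹) g
  simp [htranslate]

theorem closedNbhdSum_cayleyGraph {S : Set G} (he : (1 : G) ∉ S) (hinv : S⁻¹ = S)
    {T : Finset G} (hT : ∀ x, x ∈ T ↔ x ≠ 1 ∧ x ∉ S) (g : G → ℤ) (v : G) :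
    (cayleyGraph S).closedNbhdSum g v = ∑ u, g u - ∑ t ∈ T, g (t⁻¹ * v) := by
  classical
  have hadj (t : G) : (cayleyGraph S).Adj v (t⁻¹ * v) ↔ t ∈ S := by
    simp [cayleyGraph_adj_iff he hinv]
  have hsplit (t : G) : g (t⁻¹ * v) = (if t = 1 then g v else 0) +
      (if (cayleyGraph S).Adj v (t⁻¹ * v) then g (t⁻¹ * v) else 0) +
      (if t ∈ T then g (t⁻¹ * v) else 0) := by
    by_cases h1 : t = 1
    · simp [h1, he, hT]
    · by_cases hS : t ∈ S <;> simp [h1, hS, hadj, hT]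
  -- Reindex by `u = t⁻¹ * v`: then `t = 1`, `t ∈ S` and `t ∈ T` give `v`, its neighbours and
  -- its non-neighbours.
  let e : G ≃ G := (Equiv.inv G).trans (Equiv.mulRight v)
  rw [SimpleGraph.closedNbhdSum, ← e.sum_comp g, ← e.sum_comp]
  simp only [e, Equiv.trans_apply, Equiv.inv_apply, Equiv.coe_mulRight]
  rw [sum_congr rfl fun t _ => hsplit t, sum_add_distrib, sum_add_distrib,
    sum_ite_eq', sum_ite_mem]
  simp

theorem four_le_card_of_ncard_eq_card_sub_three {S : Set G} (hgen : Subgroup.closure S = ⊤)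
    (heven : Even (Fintype.card G)) (hcard : S.ncard = Fintype.card G - 3) :
    4 ≤ Fintype.card G := by
  by_contra! hlt
  have hS : S = ∅ := (Set.ncard_eq_zero).mp (by omega)
  rw [hS, Subgroup.closure_empty] at hgen
  have hsub : Subsingleton G := Subgroup.subsingleton_iff.mp (subsingleton_of_bot_eq_top hgen)
  have hle := Fintype.card_le_one_iff_subsingleton.mpr hsub
  obtain ⟨k, hk⟩ := heven
  have := Fintype.card_pos (α := G)
  omega

theorem four_le_sum_of_forall_pos_sub_sum_inv_mul (heven : Even (Fintype.card G))
    {T : Finset G} (hT : T.card = 2) {g : G → ℤ} (hg : ∀ v, g v = 1 ∨ g v = -1)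
    (hpos : ∀ v, 0 < ∑ u, g u - ∑ t ∈ T, g (t⁻¹ * v)) :
    4 ≤ ∑ u, g u := by
  set W := ∑ u, g u
  obtain ⟨b, hb⟩ : Even W := even_sum_of_eq_one_or_neg_one univ hg heven
  have hle (v : G) : ∑ t ∈ T, g (t⁻¹ * v) ≤ W - 2 := by
    obtain ⟨a, ha⟩ := even_sum_of_eq_one_or_neg_one T (fun t => hg (t⁻¹ * v)) (by simp [hT])
    have := hpos v
    omega
  have htotal : 2 * W ≤ Fintype.card G * (W - 2) :=
    calc 2 * W = ∑ v, ∑ t ∈ T, g (t⁻¹ * v) := by rw [sum_sum_inv_mul, hT]; norm_cast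
      _ ≤ ∑ _v : G, (W - 2) := sum_le_sum fun v _ => hle v
      _ = Fintype.card G * (W - 2) := by simp [mul_sub]
  have hn : (2 : ℤ) ≤ Fintype.card G := by
    obtain ⟨k, hk⟩ := heven
    have := Fintype.card_pos (α := G)
    omega
  by_contra! hlt
  have hW2 : W ≤ 2 := by omega
  nlinarith [mul_nonneg (sub_nonneg.2 hn) (sub_nonneg.2 hW2)]

end CayleyGraph

theorem stmt_3 {G : Type*} [Group G] [Fintype G] (n : ℕ)
    (hn : Fintype.card G = n) (heven : Even n) (S : Set G)
    (hgen : Subgroup.closure S = ⊤) (he : (1 : G) ∉ S) (hinv : S⁻¹ = S)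
    (hcard : S.ncard = n - 3) :
    signedDomNum (cayleyGraph S) = 4 := by
  classical
  subst hn
  have hn4 := four_le_card_of_ncard_eq_card_sub_three hgen heven hcard
  set T : Finset G := (insert 1 S.toFinset)ᶜ
  have hT (x : G) : x ∈ T ↔ x ≠ 1 ∧ x ∉ S := by simp [T]
  have hTcard : T.card = 2 := by
    rw [card_compl, card_insert_of_notMem (by simpa using he),
      ← Set.ncard_eq_toFinset_card', hcard]
    omega
  have hnbhd := closedNbhdSum_cayleyGraph he hinv hT
  apply signedDomNum_eq
  · obtain ⟨m, hm⟩ := heven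
    obtain ⟨g, hg, hsum⟩ := exists_eq_one_or_neg_one_sum_eq (V := G) (k := m - 2) (by omega)
    refine ⟨g, hg, fun v => ?_, by omega⟩
    have hT2 : ∑ t ∈ T, g (t⁻¹ * v) ≤ 2 := by
      have hle1 (t : G) : g (t⁻¹ * v) ≤ 1 := (hg (t⁻¹ * v)).elim le_of_eq (by omega)
      simpa [hTcard] using sum_le_card_nsmul T _ 1 fun t _ => hle1 t
    rw [hnbhd, hsum]
    omega
  · intro g hg hdom
    exact four_le_sum_of_forall_pos_sub_sum_inv_mul heven hTcard hg fun v => hnbhd g v ▸ hdom v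
end

section
/- Let G be a finite group of order n, let a, b, c be three distinct non-identity elements of G, and set S = G \ {e, a, b, c} with S = S⁻¹. Then the subgraph of the Cayley graph Cay(S:G) induced on the vertex set {a, b, c} is isomorphic to the complete graph K₃, or to the path P₃ on three vertices, or to the empty graph on three vertices. -/
/-!
Non-adjacency in `Cay(S:G)` with `S = G \ {1, a, b, c}` means that both `u v⁻¹` and `v u⁻¹` lie in
`{a, b, c}`. A graph on three vertices is `K₃`, `P₃` or empty exactly when its non-adjacency is
transitive, i.e. it never has exactly one edge. If `x ≁ y` and `y ≁ z`, the four resulting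
equations (`x = y²` or `x = z y`, and so on) leave only a few configurations; in each one, cancelling
in the group gives `x z⁻¹ ∈ {y, z}` and `z x⁻¹ ∈ {x, y}`, so `x ≁ z`.
-/

open SimpleGraph

section ThreeVertices

variable {V : Type*} (Γ : SimpleGraph V) {x y z : V}

lemma nonempty_induce_triple_iso (Δ : SimpleGraph (Fin 3))
    (hxy : x ≠ y) (hxz : x ≠ z) (hyz : y ≠ z)
    (h₀₁ : Γ.Adj x y ↔ Δ.Adj 0 1) (h₀₂ : Γ.Adj x z ↔ Δ.Adj 0 2) (h₁₂ : Γ.Adj y z ↔ Δ.Adj 1 2) :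
    Nonempty (Γ.induce ({x, y, z} : Set V) ≃g Δ) := by
  classical
  let e : Fin 3 ≃ ({x, y, z} : Set V) :=
    { toFun := ![⟨x, by simp⟩, ⟨y, by simp⟩, ⟨z, by simp⟩]
      invFun := fun v => if v.1 = x then 0 else if v.1 = y then 1 else 2
      left_inv := by
        intro i
        fin_cases i <;> simp [hxy.symm, hxz.symm, hyz.symm]
      right_inv := by
        rintro ⟨v, rfl | rfl | rfl⟩ <;> simp [hxy.symm, hxz.symm, hyz.symm] }
  refine ⟨(⟨e, fun {i j} => ?_⟩ : Δ ≃g Γ.induce ({x, y, z} : Set V)).symm⟩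
  fin_cases i <;> fin_cases j <;>
    simp [e, h₀₁, h₀₂, h₁₂, Γ.adj_comm y x, Γ.adj_comm z x, Γ.adj_comm z y,
      Δ.adj_comm 1 0, Δ.adj_comm 2 0, Δ.adj_comm 2 1]

lemma induce_triple_complete_or_path_or_bot (hxy : x ≠ y) (hxz : x ≠ z) (hyz : y ≠ z)
    (trans_y : ¬Γ.Adj x y → ¬Γ.Adj y z → ¬Γ.Adj x z)
    (trans_z : ¬Γ.Adj x z → ¬Γ.Adj z y → ¬Γ.Adj x y)
    (trans_x : ¬Γ.Adj y x → ¬Γ.Adj x z → ¬Γ.Adj y z) :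
    Nonempty (Γ.induce ({x, y, z} : Set V) ≃g (⊤ : SimpleGraph (Fin 3))) ∨
    Nonempty (Γ.induce ({x, y, z} : Set V) ≃g pathGraph 3) ∨
    Nonempty (Γ.induce ({x, y, z} : Set V) ≃g (⊥ : SimpleGraph (Fin 3))) := by
  have p₀₁ : (pathGraph 3).Adj 0 1 := by simp [pathGraph_adj]
  have p₁₂ : (pathGraph 3).Adj 1 2 := by simp [pathGraph_adj]
  have p₀₂ : ¬(pathGraph 3).Adj 0 2 := by simp [pathGraph_adj]
  by_cases hA : Γ.Adj x y <;> by_cases hB : Γ.Adj x z <;> by_cases hC : Γ.Adj y z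
  · exact .inl <| nonempty_induce_triple_iso Γ _ hxy hxz hyz
      (iff_of_true hA (by simp)) (iff_of_true hB (by simp)) (iff_of_true hC (by simp))
  · rw [Set.insert_comm]
    exact .inr <| .inl <| nonempty_induce_triple_iso Γ _ hxy.symm hyz hxz
      (iff_of_true hA.symm p₀₁) (iff_of_false hC p₀₂) (iff_of_true hB p₁₂)
  · exact .inr <| .inl <| nonempty_induce_triple_iso Γ _ hxy hxz hyz
      (iff_of_true hA p₀₁) (iff_of_false hB p₀₂) (iff_of_true hC p₁₂)
  · exact absurd hA (trans_z hB (by rwa [Γ.adj_comm]))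
  · rw [Set.pair_comm]
    exact .inr <| .inl <| nonempty_induce_triple_iso Γ _ hxz hxy hyz.symm
      (iff_of_true hB p₀₁) (iff_of_false hA p₀₂) (iff_of_true hC.symm p₁₂)
  · exact absurd hB (trans_y hA hC)
  · exact absurd hC (trans_x (by rwa [Γ.adj_comm]) hB)
  · exact .inr <| .inr <| nonempty_induce_triple_iso Γ _ hxy hxz hyz
      (iff_of_false hA (by simp)) (iff_of_false hB (by simp)) (iff_of_false hC (by simp))

end ThreeVertices

section Group

variable {G : Type*} [Group G]

lemma cayleyGraph_compl_not_adj_iff {T : Set G} {u v : G} (huv : u ≠ v) :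
    ¬(cayleyGraph Tᶜ).Adj u v ↔ u * v⁻¹ ∈ T ∧ v * u⁻¹ ∈ T := by
  simp [cayleyGraph, huv]

lemma eq_mul_or_eq_mul_self_of_chain {x y z : G} (hy : y ≠ 1) (hz : z ≠ 1) (hxz : x ≠ z)
    (h₁ : x = y * y ∨ x = z * y) (h₂ : y = x * x ∨ y = z * x)
    (h₃ : y = x * z ∨ y = z * z) (h₄ : z = x * y ∨ z = y * y) :
    x = y * z ∨ x = z * z := by
  rcases h₁ with h₁ | h₁
  · rcases h₄ with h₄ | h₄
    · rcases h₂ with h₂ | h₂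
      · have hy₃ : y * y * y = 1 := right_eq_mul.mp <| by
          calc y = x * x := h₂
            _ = y * y * y * y := by rw [h₁]; group
        exact absurd (by rw [h₄, h₁, hy₃]) hz
      · have hy₄ : y * y * y * y = 1 := right_eq_mul.mp <| by
          calc y = z * x := h₂
            _ = y * y * y * y * y := by rw [h₄, h₁]; group
        right
        calc x = y * y * y * y * (y * y) := by rw [hy₄, one_mul, h₁]
          _ = z * z := by rw [h₄, h₁]; group
    · exact absurd (h₁.trans h₄.symm) hxz
  · rcases h₂ with h₂ | h₂
    · have hzx : z * x = 1 := right_eq_mul.mp <| by rw [mul_assoc, ← h₂]; exact h₁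
      left
      rw [h₂, mul_assoc, mul_eq_one_comm.mp hzx, mul_one]
    · have hzz : z * z = 1 := right_eq_mul.mp <| by rw [mul_assoc, ← h₂]; exact h₁
      rcases h₃ with h₃ | h₃
      · left
        rw [h₃, mul_assoc, hzz, mul_one]
      · exact absurd (h₃.trans hzz) hy

lemma cayleyGraph_not_adj_trans {x y z : G} (hx : x ≠ 1) (hy : y ≠ 1) (hz : z ≠ 1)
    (hxy : x ≠ y) (hxz : x ≠ z) (hyz : y ≠ z)
    (h₁ : ¬(cayleyGraph ({1, x, y, z} : Set G)ᶜ).Adj x y)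
    (h₂ : ¬(cayleyGraph ({1, x, y, z} : Set G)ᶜ).Adj y z) :
    ¬(cayleyGraph ({1, x, y, z} : Set G)ᶜ).Adj x z := by
  rw [cayleyGraph_compl_not_adj_iff hxy] at h₁
  rw [cayleyGraph_compl_not_adj_iff hyz] at h₂
  rw [cayleyGraph_compl_not_adj_iff hxz]
  simp only [Set.mem_insert_iff, Set.mem_singleton_iff, mul_inv_eq_iff_eq_mul, one_mul,
    left_eq_mul, hx, hy, hz, hxy, hxz, hyz, hxy.symm, hxz.symm, hyz.symm, false_or, or_false]
    at h₁ h₂ ⊢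
  obtain ⟨hxy₁, hxy₂⟩ := h₁
  obtain ⟨hyz₁, hyz₂⟩ := h₂
  exact ⟨eq_mul_or_eq_mul_self_of_chain hy hz hxz hxy₁ hxy₂ hyz₁ hyz₂,
    (eq_mul_or_eq_mul_self_of_chain hy hx hxz.symm hyz₂.symm hyz₁.symm hxy₂.symm hxy₁.symm).symm⟩

end Group

theorem stmt_5_general {G : Type*} [Group G] (a b c : G)
    (ha : a ≠ 1) (hb : b ≠ 1) (hc : c ≠ 1)
    (hab : a ≠ b) (hac : a ≠ c) (hbc : b ≠ c)
    (S : Set G) (hS : S = Set.univ \ {1, a, b, c}) :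
    Nonempty ((cayleyGraph S).induce ({a, b, c} : Set G) ≃g (⊤ : SimpleGraph (Fin 3))) ∨
    Nonempty ((cayleyGraph S).induce ({a, b, c} : Set G) ≃g SimpleGraph.pathGraph 3) ∨
    Nonempty ((cayleyGraph S).induce ({a, b, c} : Set G) ≃g (⊥ : SimpleGraph (Fin 3))) := by
  have hacb : ({1, a, c, b} : Set G) = {1, a, b, c} := by rw [Set.pair_comm]
  have hbac : ({1, b, a, c} : Set G) = {1, a, b, c} := by rw [Set.insert_comm b a]
  rw [hS, ← Set.compl_eq_univ_sdiff]
  apply induce_triple_complete_or_path_or_bot _ hab hac hbc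
  · exact cayleyGraph_not_adj_trans ha hb hc hab hac hbc
  · rw [← hacb]
    exact cayleyGraph_not_adj_trans ha hc hb hac hab hbc.symm
  · rw [← hbac]
    exact cayleyGraph_not_adj_trans hb ha hc hab.symm hbc hac

theorem stmt_5 {G : Type*} [Group G] [Fintype G] (n : ℕ)
    (hn : Fintype.card G = n) (a b c : G)
    (ha : a ≠ 1) (hb : b ≠ 1) (hc : c ≠ 1)
    (hab : a ≠ b) (hac : a ≠ c) (hbc : b ≠ c)
    (S : Set G) (hS : S = Set.univ \ {1, a, b, c}) (hinv : S⁻¹ = S) :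
    Nonempty ((cayleyGraph S).induce ({a, b, c} : Set G) ≃g (⊤ : SimpleGraph (Fin 3))) ∨
    Nonempty ((cayleyGraph S).induce ({a, b, c} : Set G) ≃g SimpleGraph.pathGraph 3) ∨
    Nonempty ((cayleyGraph S).induce ({a, b, c} : Set G) ≃g (⊥ : SimpleGraph (Fin 3))) :=
  stmt_5_general a b c ha hb hc hab hac hbc S hS
end
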